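/- arXiv:1609.06306 — 4 statements merged into one kernel-verified Lean document; each statement's English description precedes it below -/
import Mathlib

section
/- Let T, T', S be Hermitian unitary operators on a Hilbert space and let σ be a unit vector. If ⟨σ|T·S|σ⟩ ≥ 1 - δ and ⟨σ|T'·S|σ⟩ ≥ 1 - δ, then ⟨σ|T·T'|σ⟩ ≥ 1 - 4δ. -/
/-!
Self-adjoint involutions are unitary, so `Tσ`, `T'σ`, `Sσ` are unit vectors, and
`⟨σ, T S σ⟩ = ⟨Tσ, Sσ⟩`. For unit vectors `Re ⟨x, y⟩ = 1 - ‖x - y‖² / 2`, so the hypotheses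
place `Tσ` and `T'σ` within `√(2δ)` of `Sσ`; by the triangle inequality `‖Tσ - T'σ‖² ≤ 8δ`.
-/

open RCLike

lemma IsSelfAdjoint.mem_unitary_of_mul_self {R : Type*} [Monoid R] [StarMul R] {U : R}
    (hU : IsSelfAdjoint U) (hUU : U * U = 1) : U ∈ unitary R := by
  rw [Unitary.mem_iff, hU.star_eq]; exact ⟨hUU, hUU⟩

lemma re_inner_eq_one_sub_norm_sub_sq_div_two {𝕜 E : Type*} [RCLike 𝕜] [NormedAddCommGroup E]
    [InnerProductSpace 𝕜 E] {x y : E} (hx : ‖x‖ = 1) (hy : ‖y‖ = 1) :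
    re (inner 𝕜 x y) = 1 - ‖x - y‖ ^ 2 / 2 := by
  rw [@norm_sub_sq 𝕜, hx, hy]
  ring

lemma one_sub_four_mul_le_re_inner {𝕜 E : Type*} [RCLike 𝕜] [NormedAddCommGroup E]
    [InnerProductSpace 𝕜 E] {x y z : E} (hx : ‖x‖ = 1) (hy : ‖y‖ = 1) (hz : ‖z‖ = 1) {δ : ℝ}
    (hxz : 1 - δ ≤ re (inner 𝕜 x z)) (hyz : 1 - δ ≤ re (inner 𝕜 y z)) :
    1 - 4 * δ ≤ re (inner 𝕜 x y) := by
  rw [re_inner_eq_one_sub_norm_sub_sq_div_two hx hz] at hxz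
  rw [re_inner_eq_one_sub_norm_sub_sq_div_two hy hz] at hyz
  rw [re_inner_eq_one_sub_norm_sub_sq_div_two hx hy]
  have htri : ‖x - y‖ ≤ ‖x - z‖ + ‖y - z‖ :=
    norm_sub_rev y z ▸ norm_sub_le_norm_sub_add_norm_sub x z y
  have hsq : ‖x - y‖ ^ 2 ≤ 2 * (‖x - z‖ ^ 2 + ‖y - z‖ ^ 2) := by
    nlinarith [norm_nonneg (x - y), sq_nonneg (‖x - z‖ - ‖y - z‖)]
  linarith

lemma IsSelfAdjoint.inner_mul_apply {𝕜 E : Type*} [RCLike 𝕜] [NormedAddCommGroup E]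
    [InnerProductSpace 𝕜 E] [CompleteSpace E] {A : E →L[𝕜] E} (hA : IsSelfAdjoint A)
    (B : E →L[𝕜] E) (x y : E) : inner 𝕜 x ((A * B) y) = inner 𝕜 (A x) (B y) :=
  (hA.isSymmetric x (B y)).symm

theorem stmt_0_general {H : Type*} [NormedAddCommGroup H] [InnerProductSpace ℂ H]
    [CompleteSpace H]
    (T T' S : H →L[ℂ] H)
    (hT : IsSelfAdjoint T) (hT' : IsSelfAdjoint T') (hS : IsSelfAdjoint S)
    (hTu : T * T = 1) (hT'u : T' * T' = 1) (hSu : S * S = 1)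
    (σ : H) (hσ : ‖σ‖ = 1) (δ : ℝ)
    (h1 : 1 - δ ≤ (inner ℂ σ ((T * S) σ) : ℂ).re)
    (h2 : 1 - δ ≤ (inner ℂ σ ((T' * S) σ) : ℂ).re) :
    1 - 4 * δ ≤ (inner ℂ σ ((T * T') σ) : ℂ).re := by
  have norm_map_σ {U : H →L[ℂ] H} (hU : IsSelfAdjoint U) (hUU : U * U = 1) : ‖U σ‖ = 1 :=
    (ContinuousLinearMap.norm_map_of_mem_unitary (hU.mem_unitary_of_mul_self hUU) σ).trans hσ
  rw [hT.inner_mul_apply] at h1 ⊢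
  rw [hT'.inner_mul_apply] at h2
  exact one_sub_four_mul_le_re_inner (𝕜 := ℂ) (norm_map_σ hT hTu) (norm_map_σ hT' hT'u)
    (norm_map_σ hS hSu) h1 h2

/-- Let `T, T', S` be Hermitian unitary operators on a Hilbert space and let
`σ` be a unit vector. If `⟨σ|T·S|σ⟩ ≥ 1 - δ` and `⟨σ|T'·S|σ⟩ ≥ 1 - δ`, then
`⟨σ|T·T'|σ⟩ ≥ 1 - 4δ` (real parts of the inner products). -/
theorem stmt_0 {H : Type*} [NormedAddCommGroup H] [InnerProductSpace ℂ H]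
    [CompleteSpace H]
    (T T' S : H →L[ℂ] H)
    (hT : IsSelfAdjoint T) (hT' : IsSelfAdjoint T') (hS : IsSelfAdjoint S)
    (hTu : T * T = 1) (hT'u : T' * T' = 1) (hSu : S * S = 1)
    (σ : H) (hσ : ‖σ‖ = 1) (δ : ℝ) (hδ : 0 ≤ δ)
    (h1 : 1 - δ ≤ (inner ℂ σ ((T * S) σ) : ℂ).re)
    (h2 : 1 - δ ≤ (inner ℂ σ ((T' * S) σ) : ℂ).re) :
    1 - 4 * δ ≤ (inner ℂ σ ((T * T') σ) : ℂ).re :=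
  stmt_0_general T T' S hT hT' hS hTu hT'u hSu σ hσ δ h1 h2
end

section
/- Let M₁ be the 4-qubit operator M₁ = (1/2)·I⊗I⊗I⊗I + (1/18)·(IXIX + XIXI + XXXX + ZIZI + IZIZ + ZZZZ + XZXZ + ZXZX + YYYY), where X, Y, Z are the Pauli matrices and each 4-letter word denotes the corresponding tensor product of single-qubit operators. Then the largest eigenvalue of M₁ is 1, achieved uniquely (up to phase) by the state |EPR⟩^{⊗2} = ((|00⟩+|11⟩)/√2)^{⊗2} (with tensor factors ordered so that qubits 1,3 form one EPR pair and qubits 2,4 the other), and every other eigenvalue of M₁ has absolute value at most 5/9. -/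
/-!
Up to the phase `i⁴ = 1` of `YYYY`, every Pauli word in `M₁` has integer entries, so `N = 18 M₁`
is an integer matrix and `e = 2 |EPR⟩^{⊗2}` an integer vector. A finite computation shows that `e`
is a left and right eigenvector of `N` for the eigenvalue `18` and that `(N - 10)(N - 6) = 24 e eᵀ`,
i.e. `(M₁ - 5/9)(M₁ - 1/3) = (8/27) |EPR⟩⟨EPR|`. Applied to an eigenvector `w` with eigenvalue `μ`
this gives `(μ - 5/9)(μ - 1/3) w = (8/27) ⟨EPR|w⟩ |EPR⟩`. If `μ ≠ 1` then `⟨EPR|w⟩ = 0`, since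
`⟨EPR|` is a left eigenvector for the eigenvalue `1`, so `μ ∈ {5/9, 1/3}`; if `μ = 1` the identity
reads `w = ⟨EPR|w⟩ |EPR⟩`.
-/

open Matrix
open scoped BigOperators

noncomputable section

/-- Pauli X on ℂ², indexed by `ZMod 2`. -/
def pX : Matrix (ZMod 2) (ZMod 2) ℂ := fun i j => if i = j then 0 else 1

/-- Pauli Z on ℂ², indexed by `ZMod 2`. -/
def pZ : Matrix (ZMod 2) (ZMod 2) ℂ := fun i j => if i = j then (if i = 0 then 1 else -1) else 0

/-- Pauli Y on ℂ², indexed by `ZMod 2`. -/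
def pY : Matrix (ZMod 2) (ZMod 2) ℂ :=
  fun i j => if i = 0 ∧ j = 1 then -Complex.I else if i = 1 ∧ j = 0 then Complex.I else 0

/-- Index set for four qubits. -/
abbrev Q4 := ZMod 2 × ZMod 2 × ZMod 2 × ZMod 2

/-- Tensor product `A ⊗ B ⊗ C ⊗ D` of four single-qubit operators. -/
def word4 (A B C D : Matrix (ZMod 2) (ZMod 2) ℂ) : Matrix Q4 Q4 ℂ :=
  fun p q => A p.1 q.1 * B p.2.1 q.2.1 * C p.2.2.1 q.2.2.1 * D p.2.2.2 q.2.2.2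

/-- The 4-qubit operator
`M₁ = (1/2)·IIII + (1/18)(IXIX + XIXI + XXXX + ZIZI + IZIZ + ZZZZ + XZXZ + ZXZX + YYYY)`. -/
def M1 : Matrix Q4 Q4 ℂ :=
  (1 / 2 : ℂ) • (1 : Matrix Q4 Q4 ℂ) +
    (1 / 18 : ℂ) •
      (word4 1 pX 1 pX + word4 pX 1 pX 1 + word4 pX pX pX pX +
        word4 pZ 1 pZ 1 + word4 1 pZ 1 pZ + word4 pZ pZ pZ pZ +
        word4 pX pZ pX pZ + word4 pZ pX pZ pX + word4 pY pY pY pY)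

/-- The state `|EPR⟩^{⊗2}` on four qubits, EPR pairs on qubits (1,3) and (2,4):
amplitude `1/2` when qubit 1 = qubit 3 and qubit 2 = qubit 4. -/
def eprV : Q4 → ℂ := fun q => if q.1 = q.2.2.1 ∧ q.2.1 = q.2.2.2 then (1 / 2 : ℂ) else 0

namespace Matrix

section Eigenvector

variable {K n : Type*} [CommRing K] [Fintype n]

theorem mulVec_sub_smul_mul_sub_smul [DecidableEq n] {A : Matrix n n K} {w : n → K} {μ : K}
    (a b : K) (hw : A *ᵥ w = μ • w) :
    ((A - a • 1) * (A - b • 1)) *ᵥ w = ((μ - a) * (μ - b)) • w := by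
  have hshift (c : K) : (A - c • 1) *ᵥ w = (μ - c) • w := by
    rw [sub_mulVec, smul_mulVec, one_mulVec, hw, sub_smul]
  rw [← mulVec_mulVec, hshift b, mulVec_smul, hshift a, smul_smul, mul_comm]

theorem dotProduct_eq_zero_of_vecMul_eq_self [NoZeroDivisors K] {A : Matrix n n K}
    {u w : n → K} {μ : K} (hu : u ᵥ* A = u) (hw : A *ᵥ w = μ • w) (hμ : μ ≠ 1) :
    u ⬝ᵥ w = 0 := by
  have h : (μ - 1) * (u ⬝ᵥ w) = 0 := by
    rw [sub_mul, one_mul, sub_eq_zero, ← smul_eq_mul, ← dotProduct_smul, ← hw,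
      dotProduct_mulVec, hu]
  exact (mul_eq_zero.1 h).resolve_left (sub_ne_zero.2 hμ)

end Eigenvector

theorem intCast_mulVec_of_mulVec_eq_smul {R m n : Type*} [Ring R] [Fintype n]
    {M : Matrix m n ℤ} {v : n → ℤ} {w : m → ℤ} {c : ℤ} (h : M *ᵥ v = c • w) :
    M.map (Int.cast : ℤ → R) *ᵥ (Int.cast ∘ v) = (c : R) • (Int.cast ∘ w) := by
  ext i
  simpa using (RingHom.map_mulVec (Int.castRingHom R) M v i).symm.trans
    (congrArg Int.cast (congrFun h i))

theorem intCast_vecMul_of_vecMul_eq_smul {R m n : Type*} [Ring R] [Fintype m]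
    {M : Matrix m n ℤ} {v : m → ℤ} {w : n → ℤ} {c : ℤ} (h : v ᵥ* M = c • w) :
    (Int.cast ∘ v) ᵥ* M.map (Int.cast : ℤ → R) = (c : R) • (Int.cast ∘ w) := by
  ext i
  simpa using (RingHom.map_vecMul (Int.castRingHom R) M v i).symm.trans
    (congrArg Int.cast (congrFun h i))

end Matrix

def pXInt : Matrix (ZMod 2) (ZMod 2) ℤ := fun i j => if i = j then 0 else 1

def pZInt : Matrix (ZMod 2) (ZMod 2) ℤ :=
  fun i j => if i = j then (if i = 0 then 1 else -1) else 0

def pYInt : Matrix (ZMod 2) (ZMod 2) ℤ :=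
  fun i j => if i = 0 ∧ j = 1 then -1 else if i = 1 ∧ j = 0 then 1 else 0

def word4Int (A B C D : Matrix (ZMod 2) (ZMod 2) ℤ) : Matrix Q4 Q4 ℤ :=
  fun p q => A p.1 q.1 * B p.2.1 q.2.1 * C p.2.2.1 q.2.2.1 * D p.2.2.2 q.2.2.2

def M1Int : Matrix Q4 Q4 ℤ :=
  (9 : ℤ) • (1 : Matrix Q4 Q4 ℤ) +
    (word4Int 1 pXInt 1 pXInt + word4Int pXInt 1 pXInt 1 + word4Int pXInt pXInt pXInt pXInt +
      word4Int pZInt 1 pZInt 1 + word4Int 1 pZInt 1 pZInt + word4Int pZInt pZInt pZInt pZInt +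
      word4Int pXInt pZInt pXInt pZInt + word4Int pZInt pXInt pZInt pXInt +
      word4Int pYInt pYInt pYInt pYInt)

def eprVInt : Q4 → ℤ := fun q => if q.1 = q.2.2.1 ∧ q.2.1 = q.2.2.2 then 1 else 0

theorem M1Int_mulVec_eprVInt : M1Int *ᵥ eprVInt = (18 : ℤ) • eprVInt := by decide

theorem eprVInt_vecMul_M1Int : eprVInt ᵥ* M1Int = (18 : ℤ) • eprVInt := by decide

theorem M1Int_sub_mul_sub :
    (M1Int - (10 : ℤ) • 1) * (M1Int - (6 : ℤ) • 1) =
      (24 : ℤ) • vecMulVec eprVInt eprVInt := by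
  decide

theorem map_word4Int (A B C D : Matrix (ZMod 2) (ZMod 2) ℤ) :
    (word4Int A B C D).map (Int.cast : ℤ → ℂ) =
      word4 (A.map Int.cast) (B.map Int.cast) (C.map Int.cast) (D.map Int.cast) := by
  ext p q
  simp [word4, word4Int]

theorem word4_smul (a : ℂ) (A B C D : Matrix (ZMod 2) (ZMod 2) ℂ) :
    word4 (a • A) (a • B) (a • C) (a • D) = a ^ 4 • word4 A B C D := by
  ext p q
  simp only [word4, Matrix.smul_apply, smul_eq_mul]
  ring

theorem pX_eq_map : pX = pXInt.map Int.cast := by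
  ext i j; simp [pX, pXInt, apply_ite (Int.cast : ℤ → ℂ)]

theorem pZ_eq_map : pZ = pZInt.map Int.cast := by
  ext i j; simp [pZ, pZInt, apply_ite (Int.cast : ℤ → ℂ)]

theorem pY_eq_I_smul_map : pY = Complex.I • pYInt.map Int.cast := by
  ext i j
  simp only [pY, pYInt, Matrix.smul_apply, map_apply, smul_eq_mul]
  split_ifs <;> simp

theorem M1Int_map : M1Int.map (Int.cast : ℤ → ℂ) = (18 : ℂ) • M1 := by
  have hY : (word4Int pYInt pYInt pYInt pYInt).map Int.cast = word4 pY pY pY pY := by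
    rw [pY_eq_I_smul_map, word4_smul, Complex.I_pow_four, one_smul, map_word4Int]
  change (Int.castRingHom ℂ).mapMatrix M1Int = _
  simp only [M1Int, map_add, map_zsmul, map_one, RingHom.mapMatrix_apply, Int.coe_castRingHom,
    map_word4Int, hY, ← pX_eq_map, ← pZ_eq_map,
    Matrix.map_one Int.cast Int.cast_zero Int.cast_one]
  rw [M1, smul_add, smul_smul, smul_smul, ← Int.cast_smul_eq_zsmul ℂ]
  norm_num

theorem intCast_comp_eprVInt : (Int.cast ∘ eprVInt : Q4 → ℂ) = (2 : ℂ) • eprV := by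
  ext q
  simp only [Function.comp_apply, eprVInt, eprV, Pi.smul_apply, smul_eq_mul]
  split_ifs <;> norm_num

theorem map_vecMulVec_eprVInt :
    (vecMulVec eprVInt eprVInt).map (Int.cast : ℤ → ℂ) = (4 : ℂ) • vecMulVec eprV eprV := by
  rw [show (vecMulVec eprVInt eprVInt).map (Int.cast : ℤ → ℂ) =
      vecMulVec (Int.cast ∘ eprVInt) (Int.cast ∘ eprVInt) by ext; simp [vecMulVec_apply],
    intCast_comp_eprVInt, smul_vecMulVec, vecMulVec_smul, smul_smul]
  norm_num

theorem M1_mulVec_eprV : M1 *ᵥ eprV = eprV := by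
  have h := intCast_mulVec_of_mulVec_eq_smul (R := ℂ) M1Int_mulVec_eprVInt
  rw [M1Int_map, intCast_comp_eprVInt, smul_mulVec, mulVec_smul, smul_smul, smul_smul] at h
  norm_num at h
  exact h

theorem eprV_vecMul_M1 : eprV ᵥ* M1 = eprV := by
  have h := intCast_vecMul_of_vecMul_eq_smul (R := ℂ) eprVInt_vecMul_M1Int
  rw [M1Int_map, intCast_comp_eprVInt, smul_vecMul, vecMul_smul, smul_smul, smul_smul] at h
  norm_num at h
  exact h

theorem M1_sub_mul_sub :
    (M1 - (5 / 9 : ℂ) • 1) * (M1 - (1 / 3 : ℂ) • 1) =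
      (8 / 27 : ℂ) • vecMulVec eprV eprV := by
  have h := congrArg (Int.castRingHom ℂ).mapMatrix M1Int_sub_mul_sub
  simp only [map_mul, map_sub, map_zsmul, map_one, RingHom.mapMatrix_apply, Int.coe_castRingHom,
    M1Int_map, map_vecMulVec_eprVInt, ← Int.cast_smul_eq_zsmul ℂ, Int.cast_ofNat] at h
  have hrescale (c : ℂ) : M1 - (c / 18) • 1 = (1 / 18 : ℂ) • ((18 : ℂ) • M1 - c • 1) := by
    rw [smul_sub, smul_smul, smul_smul, one_div_mul_cancel (by norm_num), one_smul,
      div_eq_inv_mul, one_div]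
  rw [show (5 / 9 : ℂ) = 10 / 18 by norm_num, show (1 / 3 : ℂ) = 6 / 18 by norm_num, hrescale,
    hrescale, smul_mul_smul_comm, h, smul_smul, smul_smul]
  norm_num

/-- The largest eigenvalue of `M₁` is `1`, achieved uniquely (up to scalar)
by `|EPR⟩^{⊗2}`, and every other eigenvalue has absolute value at most `5/9`. -/
theorem stmt_6 :
    M1 *ᵥ eprV = eprV ∧
      ∀ (μ : ℂ) (w : Q4 → ℂ), w ≠ 0 → M1 *ᵥ w = μ • w →
        (μ = 1 → ∃ γ : ℂ, w = γ • eprV) ∧ (μ ≠ 1 → ‖μ‖ ≤ 5 / 9) := by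
  refine ⟨M1_mulVec_eprV, fun μ w hw hμw => ?_⟩
  have key : ((μ - 5 / 9) * (μ - 1 / 3)) • w = (8 / 27 * (eprV ⬝ᵥ w)) • eprV := by
    rw [← mulVec_sub_smul_mul_sub_smul _ _ hμw, M1_sub_mul_sub, smul_mulVec, vecMulVec_mulVec,
      op_smul_eq_smul, smul_smul]
  refine ⟨fun hμ => ⟨eprV ⬝ᵥ w, ?_⟩, fun hμ => ?_⟩
  · rw [hμ, show (1 - 5 / 9 : ℂ) * (1 - 1 / 3) = 8 / 27 by norm_num, ← smul_smul] at key
    exact smul_right_injective _ (by norm_num) key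
  · rw [dotProduct_eq_zero_of_vecMul_eq_self eprV_vecMul_M1 hμw hμ, mul_zero, zero_smul,
      smul_eq_zero, or_iff_left hw, mul_eq_zero, sub_eq_zero, sub_eq_zero] at key
    rcases key with rfl | rfl <;> norm_num

end
end

section
/- Let M₁ be the 4-qubit operator of the previous statement and define the 4n-qubit operator M_n := M₁^{⊗n}. If a density matrix ρ on (ℂ²)^{⊗4n} satisfies Tr[M_n ρ] ≥ 1 - δ, then ⟨EPR|^{⊗2n} ρ |EPR⟩^{⊗2n} ≥ 1 - (9/4)δ. -/
open Matrix
open scoped BigOperators ComplexOrder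

noncomputable section

/-- The `4n`-qubit operator `M_n := M₁^{⊗n}` (tensor power, with the `4n` qubits grouped into
`n` blocks of `4`). -/
def Mn (n : ℕ) : Matrix (Fin n → Q4) (Fin n → Q4) ℂ :=
  fun f g => ∏ j, M1 (f j) (g j)

/-- The state `|EPR⟩^{⊗2n}` on `4n` qubits. -/
def eprVn (n : ℕ) : (Fin n → Q4) → ℂ := fun f => ∏ j, eprV (f j)

/-! In the basis of Bell pairs on the qubit pairs (1,3) and (2,4), every Pauli word `P Q P Q`
occurring in `M₁` becomes `(P ⊗ P) ⊗ (Q ⊗ Q)`, and `X ⊗ X`, `Z ⊗ Z`, `Y ⊗ Y` are diagonal in the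
Bell basis. Hence `M₁ = U diag(λ) U†` for a unitary `U` whose first column is `|EPR⟩^{⊗2}`, with
`λ = 1` there and `0 ≤ λ ≤ 5/9` elsewhere, and `M_n = U^{⊗n} diag(∏ λ) (U^{⊗n})†`. The diagonal
`q` of `ρ` in the basis `U^{⊗n}` is a probability vector, so
`1 - δ ≤ Tr[M_n ρ] = ∑ (∏ λ) q ≤ q₀ + (5/9)(1 - q₀)`, i.e. `q₀ ≥ 1 - (9/4) δ`. -/

open scoped Kronecker

namespace Matrix

def piKronecker {α β R : Type*} (ι : Type*) [Fintype ι] [CommSemiring R] (A : Matrix α β R) :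
    Matrix (ι → α) (ι → β) R :=
  fun f g => ∏ j, A (f j) (g j)

variable {ι α β γ R : Type*} [Fintype ι]

theorem piKronecker_mul [DecidableEq ι] [Fintype β] [CommSemiring R]
    (A : Matrix α β R) (B : Matrix β γ R) :
    piKronecker ι (A * B) = piKronecker ι A * piKronecker ι B := by
  ext f g
  simp only [piKronecker, mul_apply, Finset.prod_univ_sum, Fintype.piFinset_univ,
    Finset.prod_mul_distrib]

theorem piKronecker_diagonal [DecidableEq ι] [DecidableEq α] [CommSemiring R] (d : α → R) :
    piKronecker ι (diagonal d) = diagonal fun f => ∏ j, d (f j) := by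
  ext f g
  by_cases hfg : f = g
  · simp [piKronecker, hfg]
  · obtain ⟨j, hj⟩ := Function.ne_iff.mp hfg
    simp only [piKronecker, diagonal_apply, hfg, if_false]
    exact Finset.prod_eq_zero (Finset.mem_univ j) (if_neg hj)

theorem piKronecker_one [DecidableEq ι] [DecidableEq α] [CommSemiring R] :
    piKronecker ι (1 : Matrix α α R) = 1 := by
  simpa using piKronecker_diagonal (ι := ι) (fun _ : α => (1 : R))

theorem piKronecker_conjTranspose [CommSemiring R] [StarRing R] (A : Matrix α β R) :
    (piKronecker ι A)ᴴ = piKronecker ι Aᴴ := by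
  ext f g
  simp [piKronecker, star_prod]

end Matrix

section ConjDiagonal

variable {l m n p R : Type*} [Fintype n] [DecidableEq n]

theorem Matrix.conj_diagonal_apply [NonUnitalNonAssocSemiring R] [Star R]
    (X : Matrix m n R) (d : n → R) (i j : m) :
    (X * diagonal d * Xᴴ) i j = ∑ k, X i k * d k * star (X j k) := by
  simp only [mul_apply (M := X * diagonal d), mul_diagonal, conjTranspose_apply]

theorem Matrix.submatrix_conj_diagonal [NonUnitalNonAssocSemiring R] [Star R]
    (X : Matrix m n R) (d : n → R) (e : l → m) :
    (X * diagonal d * Xᴴ).submatrix e e = X.submatrix e id * diagonal d * (X.submatrix e id)ᴴ :=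
  rfl

theorem Matrix.conj_diagonal_kronecker_conj_diagonal [Fintype m] [DecidableEq m]
    [CommSemiring R] [StarRing R] (B : Matrix l m R) (B' : Matrix p n R) (a : m → R) (b : n → R) :
    (B * diagonal a * Bᴴ) ⊗ₖ (B' * diagonal b * B'ᴴ)
      = (B ⊗ₖ B') * diagonal (fun q : m × n => a q.1 * b q.2) * (B ⊗ₖ B')ᴴ := by
  rw [mul_kronecker_mul, mul_kronecker_mul, diagonal_kronecker_diagonal, conjTranspose_kronecker]

end ConjDiagonal

theorem Finset.prod_le_of_le_of_le_one {ι R : Type*} [Fintype ι] [CommSemiring R] [PartialOrder R]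
    [IsOrderedRing R] {a : ι → R} (h0 : ∀ i, 0 ≤ a i) (h1 : ∀ i, a i ≤ 1) {c : R} {j : ι}
    (hj : a j ≤ c) : ∏ i, a i ≤ c := by
  classical
  rw [← Finset.mul_prod_erase _ _ (Finset.mem_univ j)]
  calc a j * ∏ i ∈ Finset.univ.erase j, a i ≤ c * 1 :=
        mul_le_mul hj (Finset.prod_le_one (fun i _ => h0 i) fun i _ => h1 i)
          (Finset.prod_nonneg fun i _ => h0 i) ((h0 j).trans hj)
    _ = c := mul_one c

section FidelityBound

variable {κ ι : Type*} [Fintype κ]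

theorem Matrix.conjTranspose_mul_mul_same_apply_self (U : Matrix κ ι ℂ) (ρ : Matrix κ κ ℂ)
    (i : ι) : (Uᴴ * ρ * U) i i = star (Uᵀ i) ⬝ᵥ ρ *ᵥ Uᵀ i := by
  rw [Matrix.mul_assoc]
  simp only [mul_apply, dotProduct, mulVec, conjTranspose_apply, transpose_apply, Pi.star_apply]

theorem Matrix.trace_conj_diagonal_mul [Fintype ι] [DecidableEq ι] (U : Matrix κ ι ℂ)
    (d : ι → ℂ) (ρ : Matrix κ κ ℂ) :
    (U * diagonal d * Uᴴ * ρ).trace = ∑ i, d i * (Uᴴ * ρ * U) i i := by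
  rw [Matrix.mul_assoc, trace_mul_comm, ← Matrix.mul_assoc]
  simp only [trace, diag, mul_diagonal, mul_comm]

theorem sum_mul_le_of_forall_ne_le [Fintype ι] {x e : ι → ℝ} (hx : ∀ i, 0 ≤ x i)
    (hsum : ∑ i, x i = 1) {i₀ : ι} {c : ℝ} (hi₀ : e i₀ ≤ 1) (he : ∀ i ≠ i₀, e i ≤ c) :
    ∑ i, e i * x i ≤ c + (1 - c) * x i₀ := by
  classical
  calc ∑ i, e i * x i ≤ ∑ i, (c + (1 - c) * if i = i₀ then 1 else 0) * x i := by
        refine Finset.sum_le_sum fun i _ => mul_le_mul_of_nonneg_right ?_ (hx i)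
        by_cases hi : i = i₀
        · simp [hi, hi₀]
        · simpa [hi] using he i hi
    _ = c + (1 - c) * x i₀ := by
        simp [add_mul, Finset.sum_add_distrib, ← Finset.mul_sum, hsum]

theorem Matrix.PosSemidef.one_sub_div_le_re_dotProduct [DecidableEq κ] [Fintype ι]
    [DecidableEq ι] {ρ : Matrix κ κ ℂ} (hρ : ρ.PosSemidef) (htr : ρ.trace = 1)
    {U : Matrix κ ι ℂ} (hU : U * Uᴴ = 1) {e : ι → ℝ} {i₀ : ι} {c δ : ℝ} (hc : c < 1)
    (hi₀ : e i₀ ≤ 1) (he : ∀ i ≠ i₀, e i ≤ c)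
    (h : 1 - δ ≤ (U * diagonal (fun i => (e i : ℂ)) * Uᴴ * ρ).trace.re) :
    1 - δ / (1 - c) ≤ (star (Uᵀ i₀) ⬝ᵥ ρ *ᵥ Uᵀ i₀).re := by
  rw [trace_conj_diagonal_mul, Complex.re_sum] at h
  simp only [Complex.re_ofReal_mul] at h
  rw [← conjTranspose_mul_mul_same_apply_self]
  set σ := Uᴴ * ρ * U
  have hσ : σ.PosSemidef := hρ.conjTranspose_mul_mul_same U
  have hσ_tr : ∑ i, (σ i i).re = 1 := by
    have : σ.trace = 1 := by rw [trace_mul_cycle, hU, Matrix.one_mul, htr]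
    simpa [trace, ← Complex.re_sum] using congrArg Complex.re this
  have key := sum_mul_le_of_forall_ne_le (fun i => (Complex.nonneg_iff.mp hσ.diag_nonneg).1)
    hσ_tr hi₀ he
  have : 1 - (σ i₀ i₀).re ≤ δ / (1 - c) := by
    rw [le_div_iff₀ (sub_pos.2 hc)]
    linarith
  linarith

end FidelityBound

abbrev Q2 := ZMod 2 × ZMod 2

lemma sum_zmod_two {M : Type*} [AddCommMonoid M] (f : ZMod 2 → M) : ∑ a, f a = f 0 + f 1 :=
  Fin.sum_univ_two f

lemma forall_zmod_two {P : ZMod 2 → Prop} : (∀ z, P z) ↔ P 0 ∧ P 1 := Fin.forall_fin_two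

lemma zmod_two_one_add_one : (1 + 1 : ZMod 2) = 0 := rfl

def sgn (z : ZMod 2) : ℝ := if z = 0 then 1 else -1

/-- Its columns are the four Bell states scaled by `√2`, column `0` being `√2 |EPR⟩`. -/
def bell : Matrix Q2 Q2 ℂ := fun a s =>
  if a.2 = a.1 + s.1 then (if s.2 = 1 ∧ a.1 = 1 then -1 else 1) else 0

lemma two_smul_one_kronecker_one :
    (2 : ℂ) • ((1 : Matrix (ZMod 2) (ZMod 2) ℂ) ⊗ₖ 1) = bell * diagonal (fun _ => 1) * bellᴴ := by
  ext ⟨a, b⟩ ⟨c, d⟩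
  revert a b c d
  simp [forall_zmod_two, bell, mul_apply, Fintype.sum_prod_type, one_apply, sum_zmod_two,
    zmod_two_one_add_one]
  norm_num

lemma two_smul_pX_kronecker_pX :
    (2 : ℂ) • (pX ⊗ₖ pX) = bell * diagonal (fun s => (sgn s.2 : ℂ)) * bellᴴ := by
  ext ⟨a, b⟩ ⟨c, d⟩
  revert a b c d
  simp [forall_zmod_two, bell, pX, sgn, mul_apply, Fintype.sum_prod_type, sum_zmod_two,
    zmod_two_one_add_one]
  norm_num

lemma two_smul_pZ_kronecker_pZ :
    (2 : ℂ) • (pZ ⊗ₖ pZ) = bell * diagonal (fun s => (sgn s.1 : ℂ)) * bellᴴ := by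
  ext ⟨a, b⟩ ⟨c, d⟩
  revert a b c d
  simp [forall_zmod_two, bell, pZ, sgn, mul_apply, Fintype.sum_prod_type, sum_zmod_two,
    zmod_two_one_add_one]
  norm_num

lemma two_smul_pY_kronecker_pY :
    (2 : ℂ) • (pY ⊗ₖ pY) = bell * diagonal (fun s => -(sgn s.1 * sgn s.2 : ℂ)) * bellᴴ := by
  ext ⟨a, b⟩ ⟨c, d⟩
  revert a b c d
  simp [forall_zmod_two, bell, pY, sgn, mul_apply, Fintype.sum_prod_type, sum_zmod_two,
    zmod_two_one_add_one]
  norm_num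

def regroup : Q4 ≃ Q2 × Q2 where
  toFun p := ((p.1, p.2.2.1), (p.2.1, p.2.2.2))
  invFun u := (u.1.1, u.2.1, u.1.2, u.2.2)
  left_inv _ := rfl
  right_inv _ := rfl

lemma word4_eq_submatrix (A B C D : Matrix (ZMod 2) (ZMod 2) ℂ) :
    word4 A B C D = ((A ⊗ₖ C) ⊗ₖ (B ⊗ₖ D)).submatrix regroup regroup := by
  ext p q
  simp only [word4, submatrix_apply, kroneckerMap_apply, regroup, Equiv.coe_fn_mk]
  ring

lemma one_eq_word4 : (1 : Matrix Q4 Q4 ℂ) = word4 1 1 1 1 := by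
  simp only [word4_eq_submatrix, one_kronecker_one, submatrix_one_equiv]

def bellBasis : Matrix Q4 (Q2 × Q2) ℂ := ((1 / 2 : ℂ) • (bell ⊗ₖ bell)).submatrix regroup id

lemma word4_eq_bellBasis {A B C D : Matrix (ZMod 2) (ZMod 2) ℂ} {a b : Q2 → ℂ}
    (hAC : (2 : ℂ) • (A ⊗ₖ C) = bell * diagonal a * bellᴴ)
    (hBD : (2 : ℂ) • (B ⊗ₖ D) = bell * diagonal b * bellᴴ) :
    word4 A B C D = bellBasis * diagonal (fun u : Q2 × Q2 => a u.1 * b u.2) * bellBasisᴴ := by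
  have h : (A ⊗ₖ C) ⊗ₖ (B ⊗ₖ D)
      = (1 / 4 : ℂ) • ((2 : ℂ) • (A ⊗ₖ C)) ⊗ₖ ((2 : ℂ) • (B ⊗ₖ D)) := by
    rw [smul_kronecker, kronecker_smul, smul_smul, smul_smul]
    norm_num
  rw [word4_eq_submatrix, h, hAC, hBD, Matrix.conj_diagonal_kronecker_conj_diagonal, bellBasis,
    ← Matrix.submatrix_conj_diagonal, conjTranspose_smul, smul_mul, Matrix.mul_smul, smul_mul,
    smul_smul]
  norm_num

lemma bellBasis_mul_conjTranspose : bellBasis * bellBasisᴴ = 1 := by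
  have h := word4_eq_bellBasis two_smul_one_kronecker_one two_smul_one_kronecker_one
  rw [← one_eq_word4, mul_one, diagonal_one, Matrix.mul_one] at h
  exact h.symm

lemma bellBasis_apply_zero (p : Q4) : bellBasis p 0 = eprV p := by
  revert p
  simp [Prod.forall, forall_zmod_two, bellBasis, bell, eprV, regroup]

/-- The nine sign products are the eigenvalues of the nine Pauli words of `M1`, in the order of
its definition. -/
def eigM1 (u : Q2 × Q2) : ℝ :=
  1 / 2 + 1 / 18 * (sgn u.2.2 + sgn u.1.2 + sgn u.1.2 * sgn u.2.2 + sgn u.1.1 + sgn u.2.1 +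
    sgn u.1.1 * sgn u.2.1 + sgn u.1.2 * sgn u.2.1 + sgn u.1.1 * sgn u.2.2 +
    (sgn u.1.1 * sgn u.1.2) * (sgn u.2.1 * sgn u.2.2))

lemma M1_eq_bellBasis_conj :
    M1 = bellBasis * diagonal (fun u => (eigM1 u : ℂ)) * bellBasisᴴ := by
  have hII := two_smul_one_kronecker_one
  have hXX := two_smul_pX_kronecker_pX
  have hZZ := two_smul_pZ_kronecker_pZ
  have hYY := two_smul_pY_kronecker_pY
  rw [M1, one_eq_word4, word4_eq_bellBasis hII hII, word4_eq_bellBasis hII hXX,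
    word4_eq_bellBasis hXX hII, word4_eq_bellBasis hXX hXX, word4_eq_bellBasis hZZ hII,
    word4_eq_bellBasis hII hZZ, word4_eq_bellBasis hZZ hZZ, word4_eq_bellBasis hXX hZZ,
    word4_eq_bellBasis hZZ hXX, word4_eq_bellBasis hYY hYY]
  ext p q
  simp only [Matrix.add_apply, Matrix.smul_apply, Matrix.conj_diagonal_apply, smul_eq_mul,
    Finset.mul_sum, ← Finset.sum_add_distrib]
  refine Finset.sum_congr rfl fun u _ => ?_
  simp only [eigM1]
  push_cast
  ring

lemma eigM1_zero : eigM1 0 = 1 := by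
  norm_num [eigM1, sgn]

lemma eigM1_nonneg (u : Q2 × Q2) : 0 ≤ eigM1 u := by
  revert u
  simp [Prod.forall, forall_zmod_two, eigM1, sgn]
  norm_num

lemma eigM1_le_one (u : Q2 × Q2) : eigM1 u ≤ 1 := by
  revert u
  simp [Prod.forall, forall_zmod_two, eigM1, sgn]
  norm_num

lemma eigM1_le_of_ne_zero {u : Q2 × Q2} (hu : u ≠ 0) : eigM1 u ≤ 5 / 9 := by
  revert u
  simp [Prod.forall, forall_zmod_two, eigM1, sgn]
  norm_num

theorem stmt_7_general (n : ℕ) (ρ : Matrix (Fin n → Q4) (Fin n → Q4) ℂ)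
    (hρ : ρ.PosSemidef) (htr : ρ.trace = 1) (δ : ℝ)
    (h : 1 - δ ≤ ((Mn n * ρ).trace).re) :
    1 - (9 / 4) * δ ≤ (star (eprVn n) ⬝ᵥ (ρ *ᵥ eprVn n)).re := by
  set U := piKronecker (Fin n) bellBasis
  have hU : U * Uᴴ = 1 := by
    rw [piKronecker_conjTranspose, ← piKronecker_mul, bellBasis_mul_conjTranspose, piKronecker_one]
  have hM : Mn n = U * diagonal (fun f : Fin n → Q2 × Q2 => ((∏ j, eigM1 (f j) : ℝ) : ℂ)) * Uᴴ := by
    rw [show Mn n = piKronecker (Fin n) M1 from rfl, M1_eq_bellBasis_conj, piKronecker_mul,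
      piKronecker_mul, piKronecker_diagonal, ← piKronecker_conjTranspose]
    simp only [U, Complex.ofReal_prod]
  have hv : Uᵀ 0 = eprVn n := funext fun f => by simp [U, piKronecker, eprVn, bellBasis_apply_zero]
  have hΛ : ∀ f : Fin n → Q2 × Q2, f ≠ 0 → ∏ j, eigM1 (f j) ≤ 5 / 9 := fun f hf => by
    obtain ⟨j, hj⟩ := Function.ne_iff.mp hf
    exact Finset.prod_le_of_le_of_le_one (fun i => eigM1_nonneg _) (fun i => eigM1_le_one _)
      (eigM1_le_of_ne_zero hj)
  have key := hρ.one_sub_div_le_re_dotProduct htr hU (i₀ := 0) (by norm_num)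
    (by simp [eigM1_zero]) hΛ (hM ▸ h)
  rw [hv, show δ / (1 - 5 / 9) = 9 / 4 * δ by ring] at key
  exact key

/-- If a density matrix `ρ` on `(ℂ²)^{⊗4n}` satisfies `Tr[M_n ρ] ≥ 1 - δ`,
then `⟨EPR|^{⊗2n} ρ |EPR⟩^{⊗2n} ≥ 1 - (9/4)δ`. -/
theorem stmt_7 (n : ℕ) (ρ : Matrix (Fin n → Q4) (Fin n → Q4) ℂ)
    (hρ : ρ.PosSemidef) (htr : ρ.trace = 1) (δ : ℝ) (hδ : 0 ≤ δ)
    (h : 1 - δ ≤ ((Mn n * ρ).trace).re) :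
    1 - (9 / 4) * δ ≤ (star (eprVn n) ⬝ᵥ (ρ *ᵥ eprVn n)).re :=
  stmt_7_general n ρ hρ htr δ h

end
end

section
/- Single-round commutation on different qubits: Under the same hypotheses as the anticommutation derivation (the nine 1-9ε consistency inequalities for the Magic Square observables), ‖(X₁Z₂ - Z₂X₁)ψ‖ ≤ C√ε for some universal constant C. -/
/-!
Writing `s = √(18ε)`, each consistency inequality `⟨ψ, U V ψ⟩ ≥ 1 - 9ε` with `U` a Hermitian
involution and `V` unitary says `‖Uψ - Vψ‖ ≤ s`. Moving one factor at a time across the cut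
between Alice and Bob gives `X₁Z₂ψ ≈ Z₄X₃ψ` and `Z₂X₁ψ ≈ X₃Z₄ψ` up to `2s` each, and the
constraint on `W₂ Z₄ X₃` shows that both `Z₄X₃ψ` and `X₃Z₄ψ` lie within `s` of `-W₂ψ`.
Altogether `‖(X₁Z₂ - Z₂X₁)ψ‖ ≤ 6s`.
-/

open ContinuousLinearMap

section

variable {H : Type*} [NormedAddCommGroup H] [InnerProductSpace ℂ H]

theorem norm_sub_le_sqrt_of_re_inner {u v : H} {δ : ℝ} (hu : ‖u‖ = 1) (hv : ‖v‖ = 1)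
    (h : 1 - δ ≤ (inner ℂ u v).re) : ‖u - v‖ ≤ √(2 * δ) := by
  apply Real.le_sqrt_of_sq_le
  have := norm_sub_sq (𝕜 := ℂ) u v
  rw [hu, hv, RCLike.re_to_complex] at this
  linarith

theorem norm_mul_apply_sub_mul_apply_le {A B C D : H →L[ℂ] H} (hB : ∀ v, ‖B v‖ = ‖v‖)
    (hC : ∀ v, ‖C v‖ = ‖v‖) (hCB : Commute C B) (ψ : H) :
    ‖(C * A) ψ - (B * D) ψ‖ ≤ ‖A ψ - B ψ‖ + ‖C ψ - D ψ‖ := by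
  have key : (C * A) ψ - (B * D) ψ = C (A ψ - B ψ) + B (C ψ - D ψ) := by
    have hCBψ : C (B ψ) = B (C ψ) := congrArg (· ψ) hCB.eq
    simp only [map_sub, hCBψ]
    abel
  rw [key]
  exact (norm_add_le _ _).trans_eq (by rw [hC, hB])

variable [CompleteSpace H]

theorem IsSelfAdjoint.mem_unitary_of_mul_self_s14 {U : H →L[ℂ] H} (hU : IsSelfAdjoint U)
    (hU2 : U * U = 1) : U ∈ unitary (H →L[ℂ] H) :=
  Unitary.mem_iff.mpr ⟨by rw [hU.star_eq, hU2], by rw [hU.star_eq, hU2]⟩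

theorem IsSelfAdjoint.norm_apply_of_mul_self {U : H →L[ℂ] H} (hU : IsSelfAdjoint U)
    (hU2 : U * U = 1) (v : H) : ‖U v‖ = ‖v‖ :=
  norm_map_of_mem_unitary (hU.mem_unitary_of_mul_self_s14 hU2) v

theorem re_inner_star_apply (T : H →L[ℂ] H) (ψ : H) :
    (inner ℂ ψ ((star T) ψ)).re = (inner ℂ ψ (T ψ)).re := by
  rw [star_eq_adjoint, ← inner_conj_symm, adjoint_inner_left, Complex.conj_re]

theorem norm_apply_sub_apply_le_of_re_inner {U V : H →L[ℂ] H} (hU : IsSelfAdjoint U)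
    (hU2 : U * U = 1) (hV : V ∈ unitary (H →L[ℂ] H)) {ψ : H} (hψ : ‖ψ‖ = 1) {δ : ℝ}
    (h : 1 - δ ≤ (inner ℂ ψ ((U * V) ψ)).re) : ‖U ψ - V ψ‖ ≤ √(2 * δ) := by
  refine norm_sub_le_sqrt_of_re_inner ?_ ?_ ?_
  · rw [hU.norm_apply_of_mul_self hU2, hψ]
  · rw [norm_map_of_mem_unitary hV, hψ]
  · rwa [← adjoint_inner_right, ← star_eq_adjoint, hU.star_eq]

theorem norm_mul_apply_sub_mul_apply_le_of_re_inner {W P Q : H →L[ℂ] H} (hW : IsSelfAdjoint W)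
    (hW2 : W * W = 1) (hP : IsSelfAdjoint P) (hP2 : P * P = 1) (hQ : IsSelfAdjoint Q)
    (hQ2 : Q * Q = 1) (hWP : Commute W P) (hWQ : Commute W Q) {ψ : H} (hψ : ‖ψ‖ = 1) {δ : ℝ}
    (h : 1 - δ ≤ -(inner ℂ ψ ((W * P * Q) ψ)).re) :
    ‖(P * Q) ψ - (Q * P) ψ‖ ≤ 2 * √(2 * δ) := by
  have hPu := hP.mem_unitary_of_mul_self_s14 hP2
  have hQu := hQ.mem_unitary_of_mul_self_s14 hQ2
  have hW2' : -W * -W = 1 := by rw [neg_mul_neg, hW2]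
  have dPQ : ‖(-W) ψ - (P * Q) ψ‖ ≤ √(2 * δ) := by
    refine norm_apply_sub_apply_le_of_re_inner hW.neg hW2' (mul_mem hPu hQu) hψ ?_
    rwa [neg_mul, neg_apply, inner_neg_right, Complex.neg_re, ← mul_assoc]
  -- `star (W Q P) = P Q W = W P Q`
  have dQP : ‖(-W) ψ - (Q * P) ψ‖ ≤ √(2 * δ) := by
    refine norm_apply_sub_apply_le_of_re_inner hW.neg hW2' (mul_mem hQu hPu) hψ ?_
    rwa [neg_mul, neg_apply, inner_neg_right, Complex.neg_re,
      ← re_inner_star_apply (W * (Q * P)), star_mul, star_mul, hP.star_eq, hQ.star_eq,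
      hW.star_eq, ← (hWP.mul_right hWQ).eq, ← mul_assoc]
  calc ‖(P * Q) ψ - (Q * P) ψ‖ ≤ ‖(P * Q) ψ - (-W) ψ‖ + ‖(-W) ψ - (Q * P) ψ‖ :=
        norm_sub_le_norm_sub_add_norm_sub _ _ _
    _ ≤ 2 * √(2 * δ) := by rw [norm_sub_rev]; linarith

end

/-- single-round commutation on different qubits.  There is a universal
constant `C > 0` such that the following holds.  Let `X₁,Z₁,X₂,Z₂,W₁,W₂` be Hermitian
unitaries on Alice's side and `X₃,Z₃,X₄,Z₄,W₃,W₄` Hermitian unitaries on Bob's side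
(modelled as operators on the joint Hilbert space, every Alice operator commuting with every
Bob operator), and let `ψ` be a unit vector.  If the nine Magic Square consistency
inequalities hold up to `1 - 9ε`, then `‖(X₁Z₂ - Z₂X₁)ψ‖ ≤ C√ε`. -/
theorem stmt_14 :
    ∃ C : ℝ, 0 < C ∧
      ∀ (H : Type) (_ : NormedAddCommGroup H), ∀ (_ : InnerProductSpace ℂ H)
        (_ : CompleteSpace H)
        (X₁ Z₁ X₂ Z₂ W₁ W₂ X₃ Z₃ X₄ Z₄ W₃ W₄ : H →L[ℂ] H)
        (ψ : H) (ε : ℝ), 0 ≤ ε → ‖ψ‖ = 1 →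
        (∀ T ∈ [X₁, Z₁, X₂, Z₂, W₁, W₂, X₃, Z₃, X₄, Z₄, W₃, W₄],
          IsSelfAdjoint T ∧ T * T = 1) →
        (∀ T ∈ [X₁, Z₁, X₂, Z₂, W₁, W₂], ∀ U ∈ [X₃, Z₃, X₄, Z₄, W₃, W₄],
          Commute T U) →
        1 - 9 * ε ≤ (inner ℂ ψ ((Z₁ * Z₃) ψ) : ℂ).re →
        1 - 9 * ε ≤ (inner ℂ ψ ((Z₂ * Z₄) ψ) : ℂ).re →
        1 - 9 * ε ≤ (inner ℂ ψ ((Z₁ * Z₂ * W₃) ψ) : ℂ).re →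
        1 - 9 * ε ≤ (inner ℂ ψ ((X₂ * X₄) ψ) : ℂ).re →
        1 - 9 * ε ≤ (inner ℂ ψ ((X₁ * X₃) ψ) : ℂ).re →
        1 - 9 * ε ≤ (inner ℂ ψ ((X₁ * X₂ * W₄) ψ) : ℂ).re →
        1 - 9 * ε ≤ -(inner ℂ ψ ((W₁ * Z₃ * X₄) ψ) : ℂ).re →
        1 - 9 * ε ≤ -(inner ℂ ψ ((W₂ * Z₄ * X₃) ψ) : ℂ).re →
        1 - 9 * ε ≤ -(inner ℂ ψ ((W₁ * W₂ * W₃ * W₄) ψ) : ℂ).re →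
        ‖(X₁ * Z₂ - Z₂ * X₁) ψ‖ ≤ C * Real.sqrt ε := by
  refine ⟨6 * √18, by positivity, ?_⟩
  intro H _ _ _ X₁ Z₁ X₂ Z₂ W₁ W₂ X₃ Z₃ X₄ Z₄ W₃ W₄ ψ ε _ hψ hinv hcomm
    _ hZ₂Z₄ _ _ hX₁X₃ _ _ hW₂Z₄X₃ _
  obtain ⟨sX₁, iX₁⟩ := hinv X₁ (by simp)
  obtain ⟨sZ₂, iZ₂⟩ := hinv Z₂ (by simp)
  obtain ⟨sW₂, iW₂⟩ := hinv W₂ (by simp)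
  obtain ⟨sX₃, iX₃⟩ := hinv X₃ (by simp)
  obtain ⟨sZ₄, iZ₄⟩ := hinv Z₄ (by simp)
  have dZ := norm_apply_sub_apply_le_of_re_inner sZ₂ iZ₂ (sZ₄.mem_unitary_of_mul_self_s14 iZ₄) hψ hZ₂Z₄
  have dX := norm_apply_sub_apply_le_of_re_inner sX₁ iX₁ (sX₃.mem_unitary_of_mul_self_s14 iX₃) hψ hX₁X₃
  have dAlice := norm_mul_apply_sub_mul_apply_le (A := Z₂) (D := X₃)
    (sZ₄.norm_apply_of_mul_self iZ₄) (sX₁.norm_apply_of_mul_self iX₁)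
    (hcomm X₁ (by simp) Z₄ (by simp)) ψ
  have dAlice' := norm_mul_apply_sub_mul_apply_le (A := X₁) (D := Z₄)
    (sX₃.norm_apply_of_mul_self iX₃) (sZ₂.norm_apply_of_mul_self iZ₂)
    (hcomm Z₂ (by simp) X₃ (by simp)) ψ
  have dBob := norm_mul_apply_sub_mul_apply_le_of_re_inner sW₂ iW₂ sZ₄ iZ₄ sX₃ iX₃
    (hcomm W₂ (by simp) Z₄ (by simp)) (hcomm W₂ (by simp) X₃ (by simp)) hψ hW₂Z₄X₃
  calc ‖(X₁ * Z₂ - Z₂ * X₁) ψ‖ = dist ((X₁ * Z₂) ψ) ((Z₂ * X₁) ψ) := by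
        rw [sub_apply, dist_eq_norm]
    _ ≤ dist ((X₁ * Z₂) ψ) ((Z₄ * X₃) ψ) + dist ((Z₄ * X₃) ψ) ((X₃ * Z₄) ψ)
        + dist ((X₃ * Z₄) ψ) ((Z₂ * X₁) ψ) := dist_triangle4 _ _ _ _
    _ ≤ 6 * √(2 * (9 * ε)) := by
        rw [dist_comm _ ((Z₂ * X₁) ψ)]
        simp only [dist_eq_norm]
        linarith
    _ = 6 * √18 * √ε := by
        rw [show (2 : ℝ) * (9 * ε) = 18 * ε by ring, Real.sqrt_mul (by norm_num), mul_assoc]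
end
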